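/- arXiv:2303.14734 — 8 statements merged into one kernel-verified Lean document; each statement's English description precedes it below -/
import Mathlib

section
/- In the asymptotic setting (sample estimators replaced by population values), the difference between the variance component of the expected squared error of the two-feature linear model ŷ = ŵ_1 x_1 + ŵ_2 x_2 and that of the aggregated model ŷ = ŵ (x_1+x_2)/2 equals σ²/(n−1), which is nonnegative. -/
/-!
At population values the Gram determinant `v₁v₂ − c²` cancels, so the two-feature model
variance is `2σ²/(n−1)`, one `σ²/(n−1)` per estimated coefficient, while the aggregated
model has a single coefficient and variance `σ²/(n−1)`.
-/

lemma two_feature_asymptotic_model_variance_eq {σ2 v1 v2 c m : ℝ} (hdet : v1 * v2 - c ^ 2 ≠ 0) :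
    σ2 * (v1 * v2 + v2 * v1 - 2 * c * c) / (m * (v1 * v2 - c ^ 2)) = 2 * σ2 / m := by
  rw [show σ2 * (v1 * v2 + v2 * v1 - 2 * c * c) = 2 * σ2 * (v1 * v2 - c ^ 2) by ring,
    mul_div_mul_right _ _ hdet]

lemma aggregated_asymptotic_model_variance_eq {σ2 s m : ℝ} (hs : s ≠ 0) :
    s * σ2 / (m * s) = σ2 / m := by
  rw [mul_comm m s, mul_div_mul_left _ _ hs]

/-- Asymptotically (sample estimators replaced by population values),
the difference between the model variance of the two-feature regression and that of
the aggregated (averaged-feature) regression equals `σ²/(n-1) ≥ 0`. -/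
theorem asymptotic_variance_difference
    (n : ℕ) (hn : 1 < n) (σ2 v1 v2 c : ℝ) (hσ2 : 0 ≤ σ2)
    (hpos : c ^ 2 < v1 * v2) (hsum : 0 < v1 + v2 + 2 * c) :
    σ2 * (v1 * v2 + v2 * v1 - 2 * c * c) / (((n : ℝ) - 1) * (v1 * v2 - c ^ 2))
      - (v1 + v2 + 2 * c) * σ2 / (((n : ℝ) - 1) * (v1 + v2 + 2 * c))
      = σ2 / ((n : ℝ) - 1)
    ∧ 0 ≤ σ2 / ((n : ℝ) - 1) := by
  have hm : (0 : ℝ) < (n : ℝ) - 1 := sub_pos.mpr (by exact_mod_cast hn)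
  refine ⟨?_, div_nonneg hσ2 hm.le⟩
  rw [two_feature_asymptotic_model_variance_eq (sub_pos.mpr hpos).ne',
    aggregated_asymptotic_model_variance_eq hsum.ne']
  ring
end

section
/- Under the assumption that σ_{x_1} = σ_{x_2} = σ_x and σ̂_{x_1} = σ̂_{x_2} = σ̂_x, the finite-sample difference between the model variance of the two-feature OLS regression and that of the averaged-feature regression equals (σ²/(n−1)) · (σ²_x (1 − ρ_{x_1,x_2})) / (σ̂²_x (1 − ρ̂_{x_1,x_2})), which is nonnegative whenever |ρ_{x_1,x_2}| ≤ 1 and |ρ̂_{x_1,x_2}| < 1. -/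
/-! With equal variances both model variances factor as `σ²/(n-1) · σ²ₓ/σ̂²ₓ` times a function
of the correlations alone: `2(1-ρρ̂)/(1-ρ̂²)` for the two-feature model and `(1+ρ)/(1+ρ̂)` for the
averaged one. Over the common denominator `1-ρ̂²` their difference has numerator
`(1-ρ)(1+ρ̂)`, which leaves `(1-ρ)/(1-ρ̂)`. -/

/-- `v₁, v₂, c` are the population variances and covariance of the features, `v₁h, v₂h, ch` the
sample ones. -/
noncomputable def twoFeatureModelVariance (σ2 : ℝ) (n : ℕ) (v₁ v₂ c v₁h v₂h ch : ℝ) : ℝ :=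
  σ2 * (v₁ * v₂h + v₂ * v₁h - 2 * c * ch) / (((n : ℝ) - 1) * (v₁h * v₂h - ch ^ 2))

/-- `v` and `vh` are the population and sample variances of the summed feature `x₁ + x₂`. -/
noncomputable def averagedFeatureModelVariance (σ2 : ℝ) (n : ℕ) (v vh : ℝ) : ℝ :=
  v * σ2 / (((n : ℝ) - 1) * vh)

section EqualVariances

variable (σ2 : ℝ) (n : ℕ) (v vh ρ ρh : ℝ)

theorem twoFeatureModelVariance_of_equal_variances (hvh : vh ≠ 0) :
    twoFeatureModelVariance σ2 n v v (ρ * v) vh vh (ρh * vh)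
      = σ2 / ((n : ℝ) - 1) * (v / vh) * (2 * (1 - ρ * ρh) / (1 - ρh ^ 2)) := by
  calc twoFeatureModelVariance σ2 n v v (ρ * v) vh vh (ρh * vh)
      = σ2 * (2 * v * (1 - ρ * ρh)) * vh / (((n : ℝ) - 1) * vh * (1 - ρh ^ 2) * vh) := by
        unfold twoFeatureModelVariance; ring_nf
    _ = σ2 / ((n : ℝ) - 1) * (v / vh) * (2 * (1 - ρ * ρh) / (1 - ρh ^ 2)) := by
        rw [mul_div_mul_right _ _ hvh, div_mul_div_comm, div_mul_div_comm]
        ring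

theorem averagedFeatureModelVariance_of_equal_variances :
    averagedFeatureModelVariance σ2 n (v + v + 2 * (ρ * v)) (vh + vh + 2 * (ρh * vh))
      = σ2 / ((n : ℝ) - 1) * (v / vh) * ((1 + ρ) / (1 + ρh)) := by
  calc averagedFeatureModelVariance σ2 n (v + v + 2 * (ρ * v)) (vh + vh + 2 * (ρh * vh))
      = σ2 * v * (1 + ρ) * 2 / (((n : ℝ) - 1) * vh * (1 + ρh) * 2) := by
        unfold averagedFeatureModelVariance; ring_nf
    _ = σ2 / ((n : ℝ) - 1) * (v / vh) * ((1 + ρ) / (1 + ρh)) := by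
        rw [mul_div_mul_right _ _ two_ne_zero, div_mul_div_comm, div_mul_div_comm]

end EqualVariances

theorem two_mul_one_sub_mul_div_one_sub_sq_sub_div {ρ ρh : ℝ} (hρh : |ρh| < 1) :
    2 * (1 - ρ * ρh) / (1 - ρh ^ 2) - (1 + ρ) / (1 + ρh) = (1 - ρ) / (1 - ρh) := by
  obtain ⟨hlo, hhi⟩ := abs_lt.mp hρh
  have hsub : 1 - ρh ≠ 0 := by linarith
  have hadd : 1 + ρh ≠ 0 := by linarith
  rw [show 1 - ρh ^ 2 = (1 - ρh) * (1 + ρh) by ring]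
  field_simp
  ring

/-- Under equal population variances (`σ²ₓ`) and equal sample
variances (`σ̂²ₓ`) of the two features, the finite-sample difference between the model
variance of the two-feature OLS regression and that of the averaged-feature regression
equals `(σ²/(n-1)) · (σ²ₓ(1-ρ)) / (σ̂²ₓ(1-ρ̂))`, which is nonnegative whenever
`|ρ| ≤ 1` and `|ρ̂| < 1`. -/
theorem finite_sample_variance_difference
    (n : ℕ) (hn : 1 < n) (σ2 vx vxh ρ ρh : ℝ)
    (hσ2 : 0 ≤ σ2) (hvx : 0 ≤ vx) (hvxh : 0 < vxh)
    (hρ : |ρ| ≤ 1) (hρh : |ρh| < 1)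
    (c ch : ℝ) (hc : c = ρ * vx) (hch : ch = ρh * vxh) :
    σ2 * (vx * vxh + vx * vxh - 2 * c * ch) / (((n : ℝ) - 1) * (vxh * vxh - ch ^ 2))
      - (vx + vx + 2 * c) * σ2 / (((n : ℝ) - 1) * (vxh + vxh + 2 * ch))
      = (σ2 / ((n : ℝ) - 1)) * ((vx * (1 - ρ)) / (vxh * (1 - ρh)))
    ∧ 0 ≤ (σ2 / ((n : ℝ) - 1)) * ((vx * (1 - ρ)) / (vxh * (1 - ρh))) := by
  subst hc hch
  refine ⟨?_, ?_⟩
  · change twoFeatureModelVariance σ2 n vx vx (ρ * vx) vxh vxh (ρh * vxh)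
        - averagedFeatureModelVariance σ2 n _ _ = _
    rw [twoFeatureModelVariance_of_equal_variances _ _ _ _ _ _ hvxh.ne',
      averagedFeatureModelVariance_of_equal_variances, ← mul_sub,
      two_mul_one_sub_mul_div_one_sub_sq_sub_div hρh, mul_assoc, div_mul_div_comm]
  · have hn1 : (0 : ℝ) ≤ (n : ℝ) - 1 := sub_nonneg.mpr (by exact_mod_cast hn.le)
    have hρ1 : 0 ≤ 1 - ρ := sub_nonneg.mpr (abs_le.mp hρ).2
    have hρh1 : 0 ≤ 1 - ρh := sub_nonneg.mpr (abs_lt.mp hρh).2.le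
    positivity
end

section
/- In the asymptotic setting, aggregating two features x_1, x_2 with their average increases the squared bias by Δ_bias = σ²_{x_1} σ²_{x_2} (1 − ρ²_{x_1,x_2}) (w_1 − w_2)² / σ²_{x_1+x_2}; in particular, if σ_{x_1} = σ_{x_2} = 1 this equals (1 − ρ_{x_1,x_2})(w_1 − w_2)²/2. -/
open MeasureTheory

/-! The aggregated model leaves the residual `a x₁ + b x₂` with `a = w*/2 - w₁`,
`b = w*/2 - w₂`. Writing `v₁, v₂, c` for the second moments, the choice of `w*` makes
`(a, b)` proportional to `(-(v₂ + c), v₁ + c)` with factor `(w₁ - w₂)/S`, and the second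
moment of that residual is `S` times the Gram determinant `v₁ v₂ - c²`. -/

theorem integral_linear_combination_sq {Ω : Type*} [MeasurableSpace Ω] {μ : Measure Ω}
    {x1 x2 : Ω → ℝ} (a b : ℝ)
    (h11 : Integrable (fun ω => x1 ω * x1 ω) μ)
    (h22 : Integrable (fun ω => x2 ω * x2 ω) μ)
    (h12 : Integrable (fun ω => x1 ω * x2 ω) μ) :
    ∫ ω, (a * x1 ω + b * x2 ω) ^ 2 ∂μ
      = a ^ 2 * ∫ ω, x1 ω * x1 ω ∂μ + 2 * a * b * ∫ ω, x1 ω * x2 ω ∂μ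
        + b ^ 2 * ∫ ω, x2 ω * x2 ω ∂μ := by
  have expand : (fun ω => (a * x1 ω + b * x2 ω) ^ 2) = fun ω =>
      a ^ 2 * (x1 ω * x1 ω) + 2 * a * b * (x1 ω * x2 ω) + b ^ 2 * (x2 ω * x2 ω) := by
    funext ω; ring
  rw [expand, integral_add, integral_add, integral_const_mul, integral_const_mul,
    integral_const_mul]
  exacts [h11.const_mul _, h12.const_mul _, (h11.const_mul _).add (h12.const_mul _),
    h22.const_mul _]

theorem averaged_ols_residual_moment {v1 v2 c w1 w2 S wstar : ℝ}
    (hS : S = v1 + v2 + 2 * c) (hS0 : S ≠ 0)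
    (hwstar : wstar = 2 * (w1 * v1 + w2 * v2 + (w1 + w2) * c) / S) :
    (wstar / 2 - w1) ^ 2 * v1 + 2 * (wstar / 2 - w1) * (wstar / 2 - w2) * c
        + (wstar / 2 - w2) ^ 2 * v2
      = (v1 * v2 - c ^ 2) * (w1 - w2) ^ 2 / S := by
  have ha : wstar / 2 - w1 = (w2 - w1) * (v2 + c) / S := by
    rw [hwstar]; field_simp; rw [hS]; ring
  have hb : wstar / 2 - w2 = (w1 - w2) * (v1 + c) / S := by
    rw [hwstar]; field_simp; rw [hS]; ring
  rw [ha, hb]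
  field_simp
  rw [hS]
  ring

theorem unit_variance_bias {ρ w1 w2 : ℝ} (hρ : 1 + ρ ≠ 0) :
    1 ^ 2 * 1 ^ 2 * (1 - ρ ^ 2) * (w1 - w2) ^ 2 / (1 ^ 2 + 1 ^ 2 + 2 * (ρ * 1 * 1))
      = (1 - ρ) * (w1 - w2) ^ 2 / 2 := by
  have h2 : (1 : ℝ) ^ 2 + 1 ^ 2 + 2 * (ρ * 1 * 1) = 2 * (1 + ρ) := by ring
  rw [h2]
  field_simp
  ring

theorem asymptotic_bias_increase_general
    {Ω : Type*} [MeasurableSpace Ω] (μ : Measure Ω)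
    (x1 x2 : Ω → ℝ) (σ1 σ2 ρ w1 w2 : ℝ)
    (hInt11 : Integrable (fun ω => x1 ω * x1 ω) μ)
    (hInt22 : Integrable (fun ω => x2 ω * x2 ω) μ)
    (hInt12 : Integrable (fun ω => x1 ω * x2 ω) μ)
    (hv1 : (∫ ω, x1 ω * x1 ω ∂μ) = σ1 ^ 2) (hv2 : (∫ ω, x2 ω * x2 ω ∂μ) = σ2 ^ 2)
    (hcov : (∫ ω, x1 ω * x2 ω ∂μ) = ρ * σ1 * σ2)
    (S : ℝ) (hS : S = σ1 ^ 2 + σ2 ^ 2 + 2 * (ρ * σ1 * σ2)) (hSpos : 0 < S)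
    (wstar : ℝ)
    (hwstar : wstar = 2 * (w1 * σ1 ^ 2 + w2 * σ2 ^ 2 + (w1 + w2) * (ρ * σ1 * σ2)) / S) :
    (∫ ω, (wstar * ((x1 ω + x2 ω) / 2) - (w1 * x1 ω + w2 * x2 ω)) ^ 2 ∂μ)
      = σ1 ^ 2 * σ2 ^ 2 * (1 - ρ ^ 2) * (w1 - w2) ^ 2 / S
    ∧ (σ1 = 1 → σ2 = 1 →
        σ1 ^ 2 * σ2 ^ 2 * (1 - ρ ^ 2) * (w1 - w2) ^ 2 / S
          = (1 - ρ) * (w1 - w2) ^ 2 / 2) := by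
  have residual : (fun ω => (wstar * ((x1 ω + x2 ω) / 2) - (w1 * x1 ω + w2 * x2 ω)) ^ 2)
      = fun ω => ((wstar / 2 - w1) * x1 ω + (wstar / 2 - w2) * x2 ω) ^ 2 := by
    funext ω; ring
  constructor
  · rw [residual, integral_linear_combination_sq _ _ hInt11 hInt22 hInt12, hv1, hv2, hcov,
      averaged_ols_residual_moment hS hSpos.ne' hwstar]
    ring
  · rintro rfl rfl
    subst hS
    exact unit_variance_bias fun h => by nlinarith

/-- In the asymptotic setting, aggregating two mean-zero features
`x₁, x₂` (with variances `σ²₁, σ²₂` and correlation `ρ`) via their average increases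
the squared bias by
`Δ_bias = σ²₁ σ²₂ (1 - ρ²)(w₁ - w₂)² / σ²_{x₁+x₂}`,
which equals `(1 - ρ)(w₁ - w₂)²/2` when `σ₁ = σ₂ = 1`.  Here the bias of the
aggregated model is `E[(w* x̄ - (w₁x₁ + w₂x₂))²]` with the population OLS coefficient
`w* = 2(w₁σ²₁ + w₂σ²₂ + (w₁+w₂)cov)/σ²_{x₁+x₂}`, and the two-feature model is unbiased. -/
theorem asymptotic_bias_increase
    {Ω : Type*} [MeasurableSpace Ω] (μ : Measure Ω) [IsProbabilityMeasure μ]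
    (x1 x2 : Ω → ℝ) (σ1 σ2 ρ w1 w2 : ℝ)
    (hσ1 : 0 < σ1) (hσ2 : 0 < σ2) (hρ : |ρ| ≤ 1)
    (hInt1 : Integrable x1 μ) (hInt2 : Integrable x2 μ)
    (hInt11 : Integrable (fun ω => x1 ω * x1 ω) μ)
    (hInt22 : Integrable (fun ω => x2 ω * x2 ω) μ)
    (hInt12 : Integrable (fun ω => x1 ω * x2 ω) μ)
    (hm1 : (∫ ω, x1 ω ∂μ) = 0) (hm2 : (∫ ω, x2 ω ∂μ) = 0)
    (hv1 : (∫ ω, x1 ω * x1 ω ∂μ) = σ1 ^ 2) (hv2 : (∫ ω, x2 ω * x2 ω ∂μ) = σ2 ^ 2)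
    (hcov : (∫ ω, x1 ω * x2 ω ∂μ) = ρ * σ1 * σ2)
    (S : ℝ) (hS : S = σ1 ^ 2 + σ2 ^ 2 + 2 * (ρ * σ1 * σ2)) (hSpos : 0 < S)
    (wstar : ℝ)
    (hwstar : wstar = 2 * (w1 * σ1 ^ 2 + w2 * σ2 ^ 2 + (w1 + w2) * (ρ * σ1 * σ2)) / S) :
    (∫ ω, (wstar * ((x1 ω + x2 ω) / 2) - (w1 * x1 ω + w2 * x2 ω)) ^ 2 ∂μ)
      = σ1 ^ 2 * σ2 ^ 2 * (1 - ρ ^ 2) * (w1 - w2) ^ 2 / S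
    ∧ (σ1 = 1 → σ2 = 1 →
        σ1 ^ 2 * σ2 ^ 2 * (1 - ρ ^ 2) * (w1 - w2) ^ 2 / S
          = (1 - ρ) * (w1 - w2) ^ 2 / 2) :=
  asymptotic_bias_increase_general μ x1 x2 σ1 σ2 ρ w1 w2 hInt11 hInt22 hInt12 hv1 hv2 hcov S hS
    hSpos wstar hwstar
end

section
/- Under equal variances σ_{x_1}=σ_{x_2}=σ_x and equal sample variances, the finite-sample increase in squared bias from aggregating x_1 and x_2 with their average equals σ²_x (1 − ρ_{x_1,x_2})(w_1 − w_2)²/2, independent of the sample quantities. -/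
/-! With equal sample variances the fitted coefficient of `x̄` is `w₁ + w₂` for every sample,
so the one-dimensional predictor is `((w₁ + w₂)/2)(x₁ + x₂)`. Its squared bias is the variance of
the residual `w₁x₁ + w₂x₂ - ((w₁ + w₂)/2)(x₁ + x₂) = ((w₁ - w₂)/2)(x₁ - x₂)`, which is
`((w₁ - w₂)/2)² · 2σ²ₓ(1 - ρ)`. -/

/-- The variance of `a₁x₁ + a₂x₂` when `Var xᵢ = vᵢ` and `Cov(x₁, x₂) = c`. -/
def linCombVar (v₁ v₂ c a₁ a₂ : ℝ) : ℝ :=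
  a₁ ^ 2 * v₁ + a₂ ^ 2 * v₂ + 2 * a₁ * a₂ * c

/-- `A / Sh` is half the fitted coefficient of `x̄`, i.e. the coefficient of `x₁ + x₂`. -/
theorem bias_eq_linCombVar_residual (v₁ v₂ c w₁ w₂ A Sh : ℝ) :
    ((v₁ + v₂ + 2 * c) / Sh ^ 2) * A ^ 2
      + (w₁ ^ 2 * v₁ + w₂ ^ 2 * v₂ + 2 * w₁ * w₂ * c)
      - (2 / Sh) * (w₁ * v₁ + w₂ * v₂ + (w₁ + w₂) * c) * A
      = linCombVar v₁ v₂ c (w₁ - A / Sh) (w₂ - A / Sh) := by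
  unfold linCombVar
  ring

theorem cov_div_var_sum_of_eq_var (w₁ w₂ v c : ℝ) (h : v + v + 2 * c ≠ 0) :
    (w₁ * v + w₂ * v + (w₁ + w₂) * c) / (v + v + 2 * c) = (w₁ + w₂) / 2 := by
  rw [div_eq_div_iff h two_ne_zero]
  ring

theorem linCombVar_self_neg (v c a : ℝ) : linCombVar v v c a (-a) = 2 * a ^ 2 * (v - c) := by
  unfold linCombVar
  ring

theorem finite_sample_bias_increase_general
    (w1 w2 vx vxh ρ : ℝ)
    (c ch : ℝ) (hc : c = ρ * vx)
    (S Sh : ℝ) (hS : S = vx + vx + 2 * c) (hSh : Sh = vxh + vxh + 2 * ch)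
    (hShpos : 0 < Sh)
    (A : ℝ) (hA : A = w1 * vxh + w2 * vxh + (w1 + w2) * ch) :
    (S / Sh ^ 2) * A ^ 2
      + (w1 ^ 2 * vx + w2 ^ 2 * vx + 2 * w1 * w2 * c)
      - (2 / Sh) * (w1 * vx + w2 * vx + (w1 + w2) * c) * A
      = vx * (1 - ρ) * (w1 - w2) ^ 2 / 2 := by
  have hb : A / Sh = (w1 + w2) / 2 := by
    rw [hA, hSh]
    exact cov_div_var_sum_of_eq_var w1 w2 vxh ch (hSh ▸ hShpos.ne')
  have hresidual : w2 - (w1 + w2) / 2 = -(w1 - (w1 + w2) / 2) := by ring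
  rw [hS, bias_eq_linCombVar_residual, hb, hresidual, linCombVar_self_neg, hc]
  ring

/-- Under equal population variances (`σ²ₓ = vx`) and equal sample
variances (`σ̂²ₓ = vxh`), the finite-sample increase in squared bias from aggregating
`x₁` and `x₂` with their average (the bias of the one-dimensional model, the
two-dimensional model being unbiased) equals `σ²ₓ (1 - ρ)(w₁ - w₂)²/2`,
independently of the sample quantities. -/
theorem finite_sample_bias_increase
    (w1 w2 vx vxh ρ ρh : ℝ)
    (hvx : 0 ≤ vx) (hvxh : 0 < vxh)
    (c ch : ℝ) (hc : c = ρ * vx) (hch : ch = ρh * vxh)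
    (S Sh : ℝ) (hS : S = vx + vx + 2 * c) (hSh : Sh = vxh + vxh + 2 * ch)
    (hShpos : 0 < Sh)
    (A : ℝ) (hA : A = w1 * vxh + w2 * vxh + (w1 + w2) * ch) :
    (S / Sh ^ 2) * A ^ 2
      + (w1 ^ 2 * vx + w2 ^ 2 * vx + 2 * w1 * w2 * c)
      - (2 / Sh) * (w1 * vx + w2 * vx + (w1 + w2) * c) * A
      = vx * (1 - ρ) * (w1 - w2) ^ 2 / 2 :=
  finite_sample_bias_increase_general w1 w2 vx vxh ρ c ch hc S Sh hS hSh hShpos A hA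
end

section
/- In the asymptotic setting with general unit variances for x_1, x_2 (i.e., σ_{x_1}, σ_{x_2} arbitrary), the decrease in variance σ²/(n−1) exceeds the bias increase σ²_{x_1}σ²_{x_2}(1−ρ²)(w_1−w_2)²/σ²_{x_1+x_2} if and only if ρ²_{x_1,x_2} ≥ 1 − σ² σ²_{x_1+x_2} / ((n−1) σ²_{x_1} σ²_{x_2} (w_1 − w_2)²). -/
theorem mul_one_sub_div_le_div_iff {a m S r v : ℝ} (ha : 0 < a) (hm : 0 < m) (hS : 0 < S) :
    a * (1 - r) / S ≤ v / m ↔ 1 - v * S / (m * a) ≤ r := by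
  rw [div_le_div_iff₀ hS hm, sub_le_comm, le_div_iff₀ (by positivity)]
  constructor <;> intro h <;> linarith

theorem aggregation_condition_2d_general_general
    (n : ℕ) (hn : 1 < n) (σ2 σ1x σ2x w1 w2 ρ : ℝ)
    (hσ1x : 0 < σ1x) (hσ2x : 0 < σ2x)
    (hw : w1 ≠ w2)
    (S : ℝ) (hSpos : 0 < S) :
    σ2 / ((n : ℝ) - 1) ≥ σ1x ^ 2 * σ2x ^ 2 * (1 - ρ ^ 2) * (w1 - w2) ^ 2 / S
      ↔ ρ ^ 2 ≥ 1 - σ2 * S / (((n : ℝ) - 1) * σ1x ^ 2 * σ2x ^ 2 * (w1 - w2) ^ 2) := by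
  have hm : (0 : ℝ) < n - 1 := sub_pos.mpr (by exact_mod_cast hn)
  have hw' : w1 - w2 ≠ 0 := sub_ne_zero.mpr hw
  have ha : 0 < σ1x ^ 2 * σ2x ^ 2 * (w1 - w2) ^ 2 := by positivity
  rw [show σ1x ^ 2 * σ2x ^ 2 * (1 - ρ ^ 2) * (w1 - w2) ^ 2
        = σ1x ^ 2 * σ2x ^ 2 * (w1 - w2) ^ 2 * (1 - ρ ^ 2) by ring,
    show ((n : ℝ) - 1) * σ1x ^ 2 * σ2x ^ 2 * (w1 - w2) ^ 2
        = (n - 1) * (σ1x ^ 2 * σ2x ^ 2 * (w1 - w2) ^ 2) by ring]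
  exact mul_one_sub_div_le_div_iff ha hm hSpos

/-- In the asymptotic setting with general variances for `x₁, x₂`,
the decrease in variance `σ²/(n-1)` is at least the bias increase
`σ²₁σ²₂(1-ρ²)(w₁-w₂)²/σ²_{x₁+x₂}` if and only if
`ρ² ≥ 1 - σ² σ²_{x₁+x₂} / ((n-1) σ²₁ σ²₂ (w₁-w₂)²)`. -/
theorem aggregation_condition_2d_general
    (n : ℕ) (hn : 1 < n) (σ2 σ1x σ2x w1 w2 ρ : ℝ)
    (hσ2 : 0 ≤ σ2) (hσ1x : 0 < σ1x) (hσ2x : 0 < σ2x)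
    (hw : w1 ≠ w2) (hρ : ρ ∈ Set.Icc (-1 : ℝ) 1)
    (S : ℝ) (hS : S = σ1x ^ 2 + σ2x ^ 2 + 2 * ρ * σ1x * σ2x) (hSpos : 0 < S) :
    σ2 / ((n : ℝ) - 1) ≥ σ1x ^ 2 * σ2x ^ 2 * (1 - ρ ^ 2) * (w1 - w2) ^ 2 / S
      ↔ ρ ^ 2 ≥ 1 - σ2 * S / (((n : ℝ) - 1) * σ1x ^ 2 * σ2x ^ 2 * (w1 - w2) ^ 2) :=
  aggregation_condition_2d_general_general n hn σ2 σ1x σ2x w1 w2 ρ hσ1x hσ2x hw S hSpos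
end

section
/- In a three-feature asymptotic linear model with unit feature variances, aggregating x_1 and x_2 with their average increases the squared bias by Δ_bias = (1/2)(1−ρ_{12})(w_1−w_2)² + w_3(w_1−w_2)(ρ_{13}−ρ_{23}) + w_3²(ρ_{13}−ρ_{23})²/(2(1−ρ_{12})), where ρ_{ij} denotes the correlation between x_i and x_j. -/
/-! Both biases are second moments of linear combinations `A x₁ + B x₂ + C x₃`, hence the quadratic
form of the Gram matrix `(ρᵢⱼ)` evaluated at the coefficient vector: `(w*/2 - w₁, w*/2 - w₂, -w₃)`
after aggregation and `(a w₃, b w₃, -w₃)` before it. Subtracting the two quadratic forms and clearing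
the denominators `1 ± ρ₁₂` is then an identity of rational functions. -/

open MeasureTheory Finset

section SecondMoment

variable {Ω ι : Type*} [MeasurableSpace Ω] {μ : Measure Ω}

theorem integral_sq_sum_mul {s : Finset ι} {X : ι → Ω → ℝ}
    (hX : ∀ i ∈ s, ∀ j ∈ s, Integrable (fun ω => X i ω * X j ω) μ) (c : ι → ℝ) :
    ∫ ω, (∑ i ∈ s, c i * X i ω) ^ 2 ∂μ
      = ∑ i ∈ s, ∑ j ∈ s, c i * c j * ∫ ω, X i ω * X j ω ∂μ := by
  have hexpand : ∀ ω, (∑ i ∈ s, c i * X i ω) ^ 2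
      = ∑ i ∈ s, ∑ j ∈ s, c i * c j * (X i ω * X j ω) := fun ω => by
    rw [sq, sum_mul_sum]
    exact sum_congr rfl fun i _ => sum_congr rfl fun j _ => by ring
  simp_rw [hexpand]
  rw [integral_finsetSum _ fun i hi =>
    integrable_finsetSum _ fun j hj => (hX i hi j hj).const_mul _]
  refine sum_congr rfl fun i hi => ?_
  rw [integral_finsetSum _ fun j hj => (hX i hi j hj).const_mul _]
  exact sum_congr rfl fun j _ => integral_const_mul _ _

theorem integral_sq_linear_combination_three {x₁ x₂ x₃ : Ω → ℝ}
    (h₁₁ : Integrable (fun ω => x₁ ω * x₁ ω) μ) (h₂₂ : Integrable (fun ω => x₂ ω * x₂ ω) μ)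
    (h₃₃ : Integrable (fun ω => x₃ ω * x₃ ω) μ) (h₁₂ : Integrable (fun ω => x₁ ω * x₂ ω) μ)
    (h₁₃ : Integrable (fun ω => x₁ ω * x₃ ω) μ) (h₂₃ : Integrable (fun ω => x₂ ω * x₃ ω) μ)
    (A B C : ℝ) :
    ∫ ω, (A * x₁ ω + B * x₂ ω + C * x₃ ω) ^ 2 ∂μ
      = A ^ 2 * ∫ ω, x₁ ω * x₁ ω ∂μ + B ^ 2 * ∫ ω, x₂ ω * x₂ ω ∂μ
        + C ^ 2 * ∫ ω, x₃ ω * x₃ ω ∂μ + 2 * A * B * ∫ ω, x₁ ω * x₂ ω ∂μ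
        + 2 * A * C * ∫ ω, x₁ ω * x₃ ω ∂μ + 2 * B * C * ∫ ω, x₂ ω * x₃ ω ∂μ := by
  have hX : ∀ i ∈ (univ : Finset (Fin 3)), ∀ j ∈ (univ : Finset (Fin 3)),
      Integrable (fun ω => ![x₁, x₂, x₃] i ω * ![x₁, x₂, x₃] j ω) μ := by
    intro i _ j _
    fin_cases i <;> fin_cases j <;> simpa [mul_comm]
  have h := integral_sq_sum_mul hX ![A, B, C]
  simp only [Fin.sum_univ_three, Matrix.cons_val_zero, Matrix.cons_val_one, Matrix.cons_val_two,
    Matrix.head_cons, Matrix.tail_cons] at h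
  simp only [mul_comm (x₂ _) (x₁ _), mul_comm (x₃ _) (x₁ _), mul_comm (x₃ _) (x₂ _)] at h
  rw [h]
  ring

end SecondMoment

theorem asymptotic_bias_increase_3d_general
    {Ω : Type*} [MeasurableSpace Ω] (μ : Measure Ω)
    (x1 x2 x3 : Ω → ℝ) (ρ12 ρ13 ρ23 w1 w2 w3 : ℝ)
    (hρ12 : ρ12 ∈ Set.Ioo (-1 : ℝ) 1)
    (hInt11 : Integrable (fun ω => x1 ω * x1 ω) μ)
    (hInt22 : Integrable (fun ω => x2 ω * x2 ω) μ)
    (hInt33 : Integrable (fun ω => x3 ω * x3 ω) μ)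
    (hInt12 : Integrable (fun ω => x1 ω * x2 ω) μ)
    (hInt13 : Integrable (fun ω => x1 ω * x3 ω) μ)
    (hInt23 : Integrable (fun ω => x2 ω * x3 ω) μ)
    (hv1 : (∫ ω, x1 ω * x1 ω ∂μ) = 1) (hv2 : (∫ ω, x2 ω * x2 ω ∂μ) = 1)
    (hv3 : (∫ ω, x3 ω * x3 ω ∂μ) = 1)
    (hc12 : (∫ ω, x1 ω * x2 ω ∂μ) = ρ12)
    (hc13 : (∫ ω, x1 ω * x3 ω ∂μ) = ρ13)
    (hc23 : (∫ ω, x2 ω * x3 ω ∂μ) = ρ23)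
    -- population OLS coefficient of the regression of `y` on `x̄ = (x₁+x₂)/2`:
    (wstar : ℝ)
    (hwstar : wstar = ((w1 + w2) * (1 + ρ12) + w3 * (ρ13 + ρ23)) / (1 + ρ12))
    -- population OLS coefficients of the regression of `y` on `(x₁, x₂)` are
    -- `(w₁ + a w₃, w₂ + b w₃)` with:
    (a b : ℝ)
    (ha : a = (ρ13 - ρ12 * ρ23) / (1 - ρ12 ^ 2))
    (hb : b = (ρ23 - ρ12 * ρ13) / (1 - ρ12 ^ 2))
    (F G : ℝ)
    (hF : F = ∫ ω, (wstar * ((x1 ω + x2 ω) / 2)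
        - (w1 * x1 ω + w2 * x2 ω + w3 * x3 ω)) ^ 2 ∂μ)
    (hG : G = ∫ ω, ((w1 + a * w3) * x1 ω + (w2 + b * w3) * x2 ω
        - (w1 * x1 ω + w2 * x2 ω + w3 * x3 ω)) ^ 2 ∂μ) :
    F - G = (1 / 2) * (1 - ρ12) * (w1 - w2) ^ 2
        + w3 * (w1 - w2) * (ρ13 - ρ23)
        + w3 ^ 2 * (ρ13 - ρ23) ^ 2 / (2 * (1 - ρ12)) := by
  have gram_form (A B C : ℝ) : ∫ ω, (A * x1 ω + B * x2 ω + C * x3 ω) ^ 2 ∂μ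
      = A ^ 2 + B ^ 2 + C ^ 2 + 2 * A * B * ρ12 + 2 * A * C * ρ13 + 2 * B * C * ρ23 := by
    rw [integral_sq_linear_combination_three hInt11 hInt22 hInt33 hInt12 hInt13 hInt23,
      hv1, hv2, hv3, hc12, hc13, hc23]
    ring
  have hF' : F = ∫ ω, ((wstar / 2 - w1) * x1 ω + (wstar / 2 - w2) * x2 ω
      + (-w3) * x3 ω) ^ 2 ∂μ := by
    rw [hF]; congr 1; funext ω; ring
  have hG' : G = ∫ ω, ((a * w3) * x1 ω + (b * w3) * x2 ω + (-w3) * x3 ω) ^ 2 ∂μ := by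
    rw [hG]; congr 1; funext ω; ring
  rw [gram_form] at hF' hG'
  obtain ⟨hlow, hhigh⟩ := hρ12
  have h_add : 1 + ρ12 ≠ 0 := by linarith
  have h_sub : 1 - ρ12 ≠ 0 := by linarith
  have h_sq : 1 - ρ12 ^ 2 ≠ 0 := by nlinarith
  subst hwstar ha hb hF' hG'
  field_simp
  ring

/-- In a three-feature asymptotic linear model
`y = w₁x₁ + w₂x₂ + w₃x₃ + ε` with mean-zero, unit-variance features, aggregating
`x₁` and `x₂` with their average increases the squared bias by
`Δ = (1/2)(1-ρ₁₂)(w₁-w₂)² + w₃(w₁-w₂)(ρ₁₃-ρ₂₃) + w₃²(ρ₁₃-ρ₂₃)²/(2(1-ρ₁₂))`.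
Here `F` is the squared bias of the population OLS regression of `y` on
`x̄ = (x₁+x₂)/2` and `G` that of the population OLS regression of `y` on `(x₁, x₂)`. -/
theorem asymptotic_bias_increase_3d
    {Ω : Type*} [MeasurableSpace Ω] (μ : Measure Ω) [IsProbabilityMeasure μ]
    (x1 x2 x3 : Ω → ℝ) (ρ12 ρ13 ρ23 w1 w2 w3 : ℝ)
    (hρ12 : ρ12 ∈ Set.Ioo (-1 : ℝ) 1) (hρ13 : |ρ13| ≤ 1) (hρ23 : |ρ23| ≤ 1)
    (hInt1 : Integrable x1 μ) (hInt2 : Integrable x2 μ) (hInt3 : Integrable x3 μ)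
    (hInt11 : Integrable (fun ω => x1 ω * x1 ω) μ)
    (hInt22 : Integrable (fun ω => x2 ω * x2 ω) μ)
    (hInt33 : Integrable (fun ω => x3 ω * x3 ω) μ)
    (hInt12 : Integrable (fun ω => x1 ω * x2 ω) μ)
    (hInt13 : Integrable (fun ω => x1 ω * x3 ω) μ)
    (hInt23 : Integrable (fun ω => x2 ω * x3 ω) μ)
    (hm1 : (∫ ω, x1 ω ∂μ) = 0) (hm2 : (∫ ω, x2 ω ∂μ) = 0) (hm3 : (∫ ω, x3 ω ∂μ) = 0)
    (hv1 : (∫ ω, x1 ω * x1 ω ∂μ) = 1) (hv2 : (∫ ω, x2 ω * x2 ω ∂μ) = 1)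
    (hv3 : (∫ ω, x3 ω * x3 ω ∂μ) = 1)
    (hc12 : (∫ ω, x1 ω * x2 ω ∂μ) = ρ12)
    (hc13 : (∫ ω, x1 ω * x3 ω ∂μ) = ρ13)
    (hc23 : (∫ ω, x2 ω * x3 ω ∂μ) = ρ23)
    -- population OLS coefficient of the regression of `y` on `x̄ = (x₁+x₂)/2`:
    (wstar : ℝ)
    (hwstar : wstar = ((w1 + w2) * (1 + ρ12) + w3 * (ρ13 + ρ23)) / (1 + ρ12))
    -- population OLS coefficients of the regression of `y` on `(x₁, x₂)` are
    -- `(w₁ + a w₃, w₂ + b w₃)` with: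
    (a b : ℝ)
    (ha : a = (ρ13 - ρ12 * ρ23) / (1 - ρ12 ^ 2))
    (hb : b = (ρ23 - ρ12 * ρ13) / (1 - ρ12 ^ 2))
    (F G : ℝ)
    (hF : F = ∫ ω, (wstar * ((x1 ω + x2 ω) / 2)
        - (w1 * x1 ω + w2 * x2 ω + w3 * x3 ω)) ^ 2 ∂μ)
    (hG : G = ∫ ω, ((w1 + a * w3) * x1 ω + (w2 + b * w3) * x2 ω
        - (w1 * x1 ω + w2 * x2 ω + w3 * x3 ω)) ^ 2 ∂μ) :
    F - G = (1 / 2) * (1 - ρ12) * (w1 - w2) ^ 2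
        + w3 * (w1 - w2) * (ρ13 - ρ23)
        + w3 ^ 2 * (ρ13 - ρ23) ^ 2 / (2 * (1 - ρ12)) :=
  asymptotic_bias_increase_3d_general μ x1 x2 x3 ρ12 ρ13 ρ23 w1 w2 w3 hρ12 hInt11 hInt22 hInt33
    hInt12 hInt13 hInt23 hv1 hv2 hv3 hc12 hc13 hc23 wstar hwstar a b ha hb F G hF hG
end

section
/- In the three-dimensional asymptotic setting with unit variances, the decrease of variance σ²/(n−1) is at least the increase of squared bias Δ_bias = (1/2)(1−ρ_{12})(w_1−w_2)² + w_3(w_1−w_2)(ρ_{13}−ρ_{23}) + w_3²(ρ_{13}−ρ_{23})²/(2(1−ρ_{12})) if and only if 1−(a−b)−√(a(a−2b)) ≤ ρ_{12} ≤ 1−(a−b)+√(a(a−2b)), where a = σ²/((n−1)(w_1−w_2)²) and b = w_3(ρ_{13}−ρ_{23})/(w_1−w_2), provided a(a−2b) ≥ 0. -/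
/-!
With `t = 1 - ρ₁₂ > 0` and both sides divided by `(w₁ - w₂)²`, the condition reads
`a ≥ t / 2 + b + b² / (2t)`; clearing the denominator `2t` turns it into the quadratic
inequality `t² - 2(a - b)t + b² ≤ 0`, i.e. `(t - (a - b))² ≤ a(a - 2b)`, whose solution set
is the interval around `a - b` of radius `√(a(a - 2b))`.
-/

lemma half_add_add_sq_div_le_iff {t a b : ℝ} (ht : 0 < t) :
    t / 2 + b + b ^ 2 / (2 * t) ≤ a ↔ (t - (a - b)) ^ 2 ≤ a * (a - 2 * b) := by
  have hsum : t / 2 + b + b ^ 2 / (2 * t) = (t ^ 2 + 2 * b * t + b ^ 2) / (2 * t) := by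
    field_simp
  rw [hsum, div_le_iff₀ (by positivity)]
  constructor <;> intro h <;> linarith

lemma sq_sub_le_iff_sub_sqrt_le_and_le_add_sqrt {x c D : ℝ} (hD : 0 ≤ D) :
    (x - c) ^ 2 ≤ D ↔ c - √D ≤ x ∧ x ≤ c + √D := by
  rw [Real.sq_le hD]
  constructor <;> rintro ⟨h₁, h₂⟩ <;> constructor <;> linarith

theorem aggregation_condition_3d_general
    (n : ℕ) (hn : 1 < n) (σ2 w1 w2 w3 ρ12 ρ13 ρ23 : ℝ)
    (hw : w1 ≠ w2)
    (hρ12 : ρ12 ∈ Set.Ioo (-1 : ℝ) 1)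
    (a b : ℝ)
    (ha : a = σ2 / (((n : ℝ) - 1) * (w1 - w2) ^ 2))
    (hb : b = w3 * (ρ13 - ρ23) / (w1 - w2))
    (hdisc : 0 ≤ a * (a - 2 * b)) :
    σ2 / ((n : ℝ) - 1)
        ≥ (1 / 2) * (1 - ρ12) * (w1 - w2) ^ 2
          + w3 * (w1 - w2) * (ρ13 - ρ23)
          + w3 ^ 2 * (ρ13 - ρ23) ^ 2 / (2 * (1 - ρ12))
      ↔ (1 - (a - b) - Real.sqrt (a * (a - 2 * b)) ≤ ρ12
          ∧ ρ12 ≤ 1 - (a - b) + Real.sqrt (a * (a - 2 * b))) := by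
  have hn1 : (0 : ℝ) < (n : ℝ) - 1 := by
    have : (1 : ℝ) < n := by exact_mod_cast hn
    linarith
  have hd : w1 - w2 ≠ 0 := sub_ne_zero.mpr hw
  have ht : 0 < 1 - ρ12 := sub_pos.mpr hρ12.2
  have hvar : σ2 / ((n : ℝ) - 1) = a * (w1 - w2) ^ 2 := by
    rw [ha]; field_simp
  have hbias : (1 / 2) * (1 - ρ12) * (w1 - w2) ^ 2
        + w3 * (w1 - w2) * (ρ13 - ρ23)
        + w3 ^ 2 * (ρ13 - ρ23) ^ 2 / (2 * (1 - ρ12))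
      = ((1 - ρ12) / 2 + b + b ^ 2 / (2 * (1 - ρ12))) * (w1 - w2) ^ 2 := by
    rw [hb]; field_simp
  rw [ge_iff_le, hvar, hbias, mul_le_mul_iff_left₀ (by positivity),
    half_add_add_sq_div_le_iff ht, ← sq_sub_le_iff_sub_sqrt_le_and_le_add_sqrt hdisc]
  ring_nf

/-- In the three-dimensional asymptotic setting with unit variances,
the decrease of variance `σ²/(n-1)` is at least the increase of squared bias
`Δ_bias = (1/2)(1-ρ₁₂)(w₁-w₂)² + w₃(w₁-w₂)(ρ₁₃-ρ₂₃) + w₃²(ρ₁₃-ρ₂₃)²/(2(1-ρ₁₂))`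
if and only if `1-(a-b)-√(a(a-2b)) ≤ ρ₁₂ ≤ 1-(a-b)+√(a(a-2b))`, where
`a = σ²/((n-1)(w₁-w₂)²)` and `b = w₃(ρ₁₃-ρ₂₃)/(w₁-w₂)`, provided `a(a-2b) ≥ 0`. -/
theorem aggregation_condition_3d
    (n : ℕ) (hn : 1 < n) (σ2 w1 w2 w3 ρ12 ρ13 ρ23 : ℝ)
    (hσ2 : 0 ≤ σ2) (hw : w1 ≠ w2)
    (hρ12 : ρ12 ∈ Set.Ioo (-1 : ℝ) 1) (hρ13 : |ρ13| ≤ 1) (hρ23 : |ρ23| ≤ 1)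
    (a b : ℝ)
    (ha : a = σ2 / (((n : ℝ) - 1) * (w1 - w2) ^ 2))
    (hb : b = w3 * (ρ13 - ρ23) / (w1 - w2))
    (hdisc : 0 ≤ a * (a - 2 * b)) :
    σ2 / ((n : ℝ) - 1)
        ≥ (1 / 2) * (1 - ρ12) * (w1 - w2) ^ 2
          + w3 * (w1 - w2) * (ρ13 - ρ23)
          + w3 ^ 2 * (ρ13 - ρ23) ^ 2 / (2 * (1 - ρ12))
      ↔ (1 - (a - b) - Real.sqrt (a * (a - 2 * b)) ≤ ρ12
          ∧ ρ12 ≤ 1 - (a - b) + Real.sqrt (a * (a - 2 * b))) :=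
  aggregation_condition_3d_general n hn σ2 w1 w2 w3 ρ12 ρ13 ρ23 hw hρ12 a b ha hb hdisc
end

section
/- In the finite-sample bivariate setting assuming only unit population variances (σ_{x_1} = σ_{x_2} = 1), the difference between the two-dimensional and one-dimensional model variances equals (σ²/(n−1)) · [ (σ̂²_{x_1} − σ̂²_{x_2})² + 2(1 − ρ)(σ̂²_{x_1} + ĉov)(σ̂²_{x_2} + ĉov) ] / [ σ̂²_{x_1} σ̂²_{x_2} (1 − ρ̂²) σ̂²_{x_1+x_2} ], where ρ = cov(x_1,x_2), ĉov = ĉov(x_1,x_2), ρ̂ = ĉov/(σ̂_{x_1} σ̂_{x_2}), σ̂²_{x_1+x_2} = σ̂²_{x_1} + σ̂²_{x_2} + 2ĉov. -/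
/-! After factoring out `σ²/(n-1)`, the sample correlation disappears through
`σ̂²₁ σ̂²₂ (1 - ρ̂²) = σ̂²₁ σ̂²₂ - ĉ²`, and what remains is the difference of two fractions
brought over the common denominator `(σ̂²₁ σ̂²₂ - ĉ²) σ̂²_{x₁+x₂}`. -/

theorem mul_one_sub_div_sqrt_mul_sqrt_sq {a b : ℝ} (ha : 0 < a) (hb : 0 < b) (c : ℝ) :
    a * b * (1 - (c / (Real.sqrt a * Real.sqrt b)) ^ 2) = a * b - c ^ 2 := by
  rw [div_pow, mul_pow, Real.sq_sqrt ha.le, Real.sq_sqrt hb.le]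
  field_simp

theorem div_sub_div_bivariate_model {s1 s2 c ρ : ℝ} (hD : s1 * s2 - c ^ 2 ≠ 0)
    (hS : s1 + s2 + 2 * c ≠ 0) :
    (s2 + s1 - 2 * ρ * c) / (s1 * s2 - c ^ 2) - (2 + 2 * ρ) / (s1 + s2 + 2 * c)
      = ((s1 - s2) ^ 2 + 2 * (1 - ρ) * (s1 + c) * (s2 + c))
          / ((s1 * s2 - c ^ 2) * (s1 + s2 + 2 * c)) := by
  rw [div_sub_div _ _ hD hS]
  ring

theorem finite_sample_variance_difference_general_general
    (n : ℕ) (σ2 s1 s2 c ρ : ℝ)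
    (hs1 : 0 < s1) (hs2 : 0 < s2)
    (hc : c ^ 2 < s1 * s2)
    (Sh : ℝ) (hSh : Sh = s1 + s2 + 2 * c) (hShpos : 0 < Sh)
    (ρh : ℝ) (hρh : ρh = c / (Real.sqrt s1 * Real.sqrt s2)) :
    σ2 * (s2 + s1 - 2 * ρ * c) / (((n : ℝ) - 1) * (s1 * s2 - c ^ 2))
      - σ2 * (2 + 2 * ρ) / (((n : ℝ) - 1) * Sh)
      = (σ2 / ((n : ℝ) - 1)) *
        (((s1 - s2) ^ 2 + 2 * (1 - ρ) * (s1 + c) * (s2 + c))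
          / (s1 * s2 * (1 - ρh ^ 2) * Sh)) := by
  subst hSh hρh
  rw [mul_one_sub_div_sqrt_mul_sqrt_sq hs1 hs2, mul_div_mul_comm, mul_div_mul_comm, ← mul_sub,
    div_sub_div_bivariate_model (sub_pos.2 hc).ne' hShpos.ne']

/-- In the finite-sample bivariate setting assuming only unit
population variances (so the population covariance equals the correlation `ρ`), the
difference between the two-dimensional and one-dimensional model variances equals
`(σ²/(n-1)) · [(σ̂²₁-σ̂²₂)² + 2(1-ρ)(σ̂²₁+ĉ)(σ̂²₂+ĉ)] / [σ̂²₁ σ̂²₂ (1-ρ̂²) σ̂²_{x₁+x₂}]`,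
where `ρ̂ = ĉ/(σ̂₁σ̂₂)` and `σ̂²_{x₁+x₂} = σ̂²₁ + σ̂²₂ + 2ĉ`. -/
theorem finite_sample_variance_difference_general
    (n : ℕ) (hn : 1 < n) (σ2 s1 s2 c ρ : ℝ)
    (hσ2 : 0 ≤ σ2) (hs1 : 0 < s1) (hs2 : 0 < s2)
    (hc : c ^ 2 < s1 * s2) (hρ : |ρ| ≤ 1)
    (Sh : ℝ) (hSh : Sh = s1 + s2 + 2 * c) (hShpos : 0 < Sh)
    (ρh : ℝ) (hρh : ρh = c / (Real.sqrt s1 * Real.sqrt s2)) :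
    σ2 * (s2 + s1 - 2 * ρ * c) / (((n : ℝ) - 1) * (s1 * s2 - c ^ 2))
      - σ2 * (2 + 2 * ρ) / (((n : ℝ) - 1) * Sh)
      = (σ2 / ((n : ℝ) - 1)) *
        (((s1 - s2) ^ 2 + 2 * (1 - ρ) * (s1 + c) * (s2 + c))
          / (s1 * s2 * (1 - ρh ^ 2) * Sh)) :=
  finite_sample_variance_difference_general_general n σ2 s1 s2 c ρ hs1 hs2 hc Sh hSh hShpos ρh hρh
end
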